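/- arXiv:1905.07361 — 5 statements merged into one kernel-verified Lean document; each statement's English description precedes it below -/
import Mathlib

section
/- Among all probability distributions q on ℕ with mean N, the distribution maximizing H(q) + ∑_k q(k) log₂(k+1) (where H is the Shannon entropy) is q(k) = 4(k+1) N^k / (N+2)^{k+2}. -/
/-!
`q*` is the Gibbs distribution for the mean constraint relative to the weights `k + 1`:
`log (k + 1) - log q*(k) = A + B k` with `A = log ((N + 2)² / 4)` and `B = log ((N + 2) / N)`.
Hence every `q` with total mass `1` and mean `N` has `F(q) ln 2 = ∑ q (log q* - log q) + A + B N`,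
where the sum is `≤ 0` by Gibbs' inequality and vanishes at `q = q*`. The mass and the mean of
`q*` come from the series `∑ (k + 1) r^k` and `∑ k (k + 1) r^k` at `r = N / (N + 2)`.
-/

/-- The maximizing distribution `q* k = 4 (k+1) N^k / (N+2)^(k+2)`. -/
noncomputable def qstar (N : ℝ) (k : ℕ) : ℝ := 4 * ((k : ℝ) + 1) * N ^ k / (N + 2) ^ (k + 2)

open Real

section Gibbs

variable {ι : Type*} {p q : ι → ℝ}

lemma mul_log_sub_log_le_sub {x y : ℝ} (hx : 0 ≤ x) (hy : 0 < y) :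
    x * (log y - log x) ≤ y - x := by
  rcases hx.eq_or_lt with rfl | hx
  · simpa using hy.le
  rw [← log_div hy.ne' hx.ne']
  calc x * log (y / x) ≤ x * (y / x - 1) := by gcongr; exact log_le_sub_one_of_pos (by positivity)
    _ = y - x := by field_simp

lemma tsum_mul_log_sub_log_nonpos {a : ℝ} (hq0 : ∀ i, 0 ≤ q i) (hp0 : ∀ i, 0 < p i)
    (hp : HasSum p a) (hq : HasSum q a)
    (hs : Summable fun i => q i * (log (p i) - log (q i))) :
    ∑' i, q i * (log (p i) - log (q i)) ≤ 0 := by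
  have hsub : HasSum (fun i => p i - q i) 0 := by simpa using hp.sub hq
  simpa [hsub.tsum_eq] using
    hs.tsum_le_tsum (fun i => mul_log_sub_log_le_sub (hq0 i) (hp0 i)) hsub.summable

/-- Maximum entropy principle: the maximizer is the exponential family `p ∝ w e^(-B c)`. -/
theorem tsum_neg_mul_log_add_mul_log_le_of_log_sub_log_affine {w c : ι → ℝ} {A B m : ℝ}
    (hq0 : ∀ i, 0 ≤ q i) (hp0 : ∀ i, 0 < p i)
    (hlog : ∀ i, log (w i) - log (p i) = A + B * c i)
    (hp : HasSum p 1) (hq : HasSum q 1)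
    (hpc : HasSum (fun i => c i * p i) m) (hqc : HasSum (fun i => c i * q i) m)
    (hqF : Summable fun i => -q i * log (q i) + q i * log (w i)) :
    ∑' i, (-q i * log (q i) + q i * log (w i)) ≤
      ∑' i, (-p i * log (p i) + p i * log (w i)) := by
  have split : ∀ (r : ι → ℝ) i, -r i * log (r i) + r i * log (w i) =
      r i * (log (p i) - log (r i)) + (A * r i + B * (c i * r i)) := by
    intro r i
    linear_combination r i * hlog i
  have hlin : ∀ r : ι → ℝ, HasSum r 1 → HasSum (fun i => c i * r i) m →
      HasSum (fun i => A * r i + B * (c i * r i)) (A + B * m) := fun r h1 hc => by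
    simpa using (h1.mul_left A).add (hc.mul_left B)
  have hpF : HasSum (fun i => -p i * log (p i) + p i * log (w i)) (A + B * m) := by
    refine (hlin p hp hpc).congr_fun fun i => ?_
    rw [split p i, sub_self, mul_zero, zero_add]
  have hqlin := hlin q hq hqc
  have hgibbs : Summable fun i => q i * (log (p i) - log (q i)) :=
    (hqF.sub hqlin.summable).congr fun i => by rw [split q i]; ring
  rw [hpF.tsum_eq, tsum_congr (split q), hgibbs.tsum_add hqlin.summable, hqlin.tsum_eq]
  linarith [tsum_mul_log_sub_log_nonpos hq0 hp0 hp hq hgibbs]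

end Gibbs

section Series

variable {𝕜 : Type*} [NormedField 𝕜] {r : 𝕜}

lemma hasSum_succ_mul_geometric (hr : ‖r‖ < 1) :
    HasSum (fun k : ℕ => ((k : 𝕜) + 1) * r ^ k) (1 / (1 - r) ^ 2) :=
  (hasSum_choose_mul_geometric_of_norm_lt_one 1 hr).congr_fun fun k => by simp

lemma hasSum_coe_mul_succ_mul_geometric (hr : ‖r‖ < 1) :
    HasSum (fun k : ℕ => (k : 𝕜) * ((k : 𝕜) + 1) * r ^ k) (2 * r / (1 - r) ^ 3) := by
  have hr1 : 1 - r ≠ 0 := sub_ne_zero.mpr (by rintro rfl; simp at hr)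
  have h := ((hasSum_choose_mul_geometric_of_norm_lt_one 2 hr).mul_left 2).sub
    ((hasSum_succ_mul_geometric hr).mul_left 2)
  rw [show 2 * (1 / (1 - r) ^ (2 + 1)) - 2 * (1 / (1 - r) ^ 2) = 2 * r / (1 - r) ^ 3 by
    field_simp; ring] at h
  refine h.congr_fun fun k => ?_
  have hchoose : (k + 2).choose 2 * 2 = (k + 2) * (k + 1) := by
    simpa using (Nat.add_one_mul_choose_eq (k + 1) 1).symm
  have hchoose_cast := congrArg (Nat.cast : ℕ → 𝕜) hchoose
  push_cast at hchoose_cast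
  linear_combination -r ^ k * hchoose_cast

end Series

section qstar

variable {N : ℝ}

lemma qstar_pos (hN : 0 < N) (k : ℕ) : 0 < qstar N k := by
  unfold qstar; positivity

lemma qstar_eq_geometric (hN : 0 < N) (k : ℕ) :
    qstar N k = (2 / (N + 2)) ^ 2 * (((k : ℝ) + 1) * (N / (N + 2)) ^ k) := by
  unfold qstar
  rw [div_pow, div_pow, pow_add]
  field_simp
  norm_num

lemma norm_div_add_two_lt_one (hN : 0 < N) : ‖N / (N + 2)‖ < 1 := by
  rw [norm_of_nonneg (by positivity), div_lt_one (by positivity)]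
  linarith

lemma one_sub_div_add_two (hN : 0 < N) : 1 - N / (N + 2) = 2 / (N + 2) := by
  field_simp; ring

lemma hasSum_qstar (hN : 0 < N) : HasSum (qstar N) 1 := by
  have h := (hasSum_succ_mul_geometric (norm_div_add_two_lt_one hN)).mul_left ((2 / (N + 2)) ^ 2)
  rw [one_sub_div_add_two hN, mul_one_div_cancel (by positivity)] at h
  exact h.congr_fun (qstar_eq_geometric hN)

lemma hasSum_coe_mul_qstar (hN : 0 < N) : HasSum (fun k : ℕ => (k : ℝ) * qstar N k) N := by
  have h := (hasSum_coe_mul_succ_mul_geometric (norm_div_add_two_lt_one hN)).mul_left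
    ((2 / (N + 2)) ^ 2)
  have hmean : (2 / (N + 2)) ^ 2 * (2 * (N / (N + 2)) / (2 / (N + 2)) ^ 3) = N := by field_simp
  rw [one_sub_div_add_two hN, hmean] at h
  exact h.congr_fun fun k => by rw [qstar_eq_geometric hN k]; ring

lemma log_succ_sub_log_qstar (hN : 0 < N) (k : ℕ) :
    log ((k : ℝ) + 1) - log (qstar N k) =
      (2 * log (N + 2) - log 4) + (log (N + 2) - log N) * k := by
  unfold qstar
  rw [log_div (by positivity) (by positivity), log_mul (by positivity) (by positivity),
    log_mul (by norm_num) (by positivity), log_pow, log_pow]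
  push_cast
  ring

end qstar

lemma neg_mul_logb_add_mul_logb (b x y : ℝ) :
    -x * logb b x + x * logb b y = (-x * log x + x * log y) / log b := by
  simp only [logb]; ring

/-- Among probability distributions on ℕ with mean `N`, the functional
`F(q) = -∑ q k logb 2 (q k) + ∑ q k logb 2 (k+1)` is maximized by `qstar N`. -/
theorem stmt2 (N : ℝ) (hN : 0 < N) (q : ℕ → ℝ)
    (hq0 : ∀ k, 0 ≤ q k)
    (hqs : Summable q) (hqsum : ∑' k : ℕ, q k = 1)
    (hqms : Summable fun k : ℕ => (k : ℝ) * q k) (hqmean : ∑' k : ℕ, (k : ℝ) * q k = N)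
    (hFs : Summable fun k : ℕ => -(q k) * Real.logb 2 (q k) + q k * Real.logb 2 ((k : ℝ) + 1)) :
    (∑' k : ℕ, (-(q k) * Real.logb 2 (q k) + q k * Real.logb 2 ((k : ℝ) + 1))) ≤
      ∑' k : ℕ, (-(qstar N k) * Real.logb 2 (qstar N k)
        + qstar N k * Real.logb 2 ((k : ℝ) + 1)) := by
  have hlog2 : 0 < log 2 := log_pos one_lt_two
  simp only [neg_mul_logb_add_mul_logb, summable_div_const_iff hlog2.ne'] at hFs ⊢
  rw [tsum_div_const, tsum_div_const]
  refine div_le_div_of_nonneg_right ?_ hlog2.le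
  exact tsum_neg_mul_log_add_mul_log_le_of_log_sub_log_affine hq0 (qstar_pos hN)
    (log_succ_sub_log_qstar hN) (hasSum_qstar hN) (hqsum ▸ hqs.hasSum)
    (hasSum_coe_mul_qstar hN) (hqmean ▸ hqms.hasSum) hFs
end

section
/- For the uniform joint distribution p(x,y) = 1/((2N+1)(x+1)) · [uniform over y given x] on {(x,y) : 0 ≤ x ≤ 2N, 0 ≤ y ≤ x} with P(X=x) = 1/(2N+1) and Y uniform on {0,…,x} given X=x, the Shannon entropy equals log₂(2N+1) + (1/(2N+1)) ∑_{x=0}^{2N} log₂(x+1) = log₂(2N+1) + (1/(2N+1)) log₂((2N+1)!). -/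
/-!
Sampling `x` uniformly from `m` values and then `y` uniformly from a block of `k_x` values, the
entropy splits by the chain rule into the entropy `log m` of the first choice plus the average
`(1/m) ∑ₓ log k_x` of the conditional entropies. For the blocks `k_x = x + 1`, `x < 2N + 1`,
that average is `log (2N+1)! / (2N+1)`.
-/

open Finset Real

theorem Real.sum_range_logb_add_one (b : ℝ) (n : ℕ) :
    ∑ x ∈ range n, logb b ((x : ℝ) + 1) = logb b (n.factorial : ℝ) := by
  rw [← prod_range_add_one_eq_factorial, Nat.cast_prod, logb_prod _ _ fun x _ => by positivity]
  push_cast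
  rfl

section UniformMixture

variable {ι κ : Type*} (b : ℝ)

theorem sum_neg_mul_logb_uniform_block {a : ℝ} (ha : a ≠ 0) {t : Finset κ} (ht : t.Nonempty) :
    ∑ _y ∈ t, -(1 / (a * #t)) * logb b (1 / (a * #t)) = (logb b a + logb b #t) / a := by
  have hk : (#t : ℝ) ≠ 0 := by exact_mod_cast ht.card_ne_zero
  rw [sum_const, nsmul_eq_mul, one_div, logb_inv, logb_mul ha hk]
  field_simp

theorem sum_sum_neg_mul_logb_uniform_mixture (s : Finset ι) (t : ι → Finset κ)
    (ht : ∀ x ∈ s, (t x).Nonempty) :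
    ∑ x ∈ s, ∑ _y ∈ t x, -(1 / ((#s : ℝ) * #(t x))) * logb b (1 / ((#s : ℝ) * #(t x))) =
      logb b #s + (1 / #s) * ∑ x ∈ s, logb b #(t x) := by
  rcases s.eq_empty_or_nonempty with rfl | hs
  · simp
  have hm : (#s : ℝ) ≠ 0 := by exact_mod_cast hs.card_ne_zero
  rw [sum_congr rfl fun x hx => sum_neg_mul_logb_uniform_block b hm (ht x hx), ← sum_div,
    sum_add_distrib, sum_const, nsmul_eq_mul]
  field_simp

end UniformMixture

/-- Entropy of the joint pmf `p(x,y) = 1/((2N+1)(x+1))` on `{x ≤ 2N, y ≤ x}`. -/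
theorem stmt7 (N : ℕ) :
    (∑ x ∈ Finset.range (2 * N + 1), ∑ y ∈ Finset.range (x + 1),
        -(1 / (((2 * N : ℕ) + 1 : ℝ) * ((x : ℝ) + 1))) *
          Real.logb 2 (1 / (((2 * N : ℕ) + 1 : ℝ) * ((x : ℝ) + 1)))) =
      Real.logb 2 ((2 * N : ℕ) + 1 : ℝ)
        + (1 / ((2 * N : ℕ) + 1 : ℝ)) *
            ∑ x ∈ Finset.range (2 * N + 1), Real.logb 2 ((x : ℝ) + 1) ∧
    (∑ x ∈ Finset.range (2 * N + 1), ∑ y ∈ Finset.range (x + 1),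
        -(1 / (((2 * N : ℕ) + 1 : ℝ) * ((x : ℝ) + 1))) *
          Real.logb 2 (1 / (((2 * N : ℕ) + 1 : ℝ) * ((x : ℝ) + 1)))) =
      Real.logb 2 ((2 * N : ℕ) + 1 : ℝ)
        + (1 / ((2 * N : ℕ) + 1 : ℝ)) * Real.logb 2 ((Nat.factorial (2 * N + 1) : ℝ)) := by
  have chain := sum_sum_neg_mul_logb_uniform_mixture 2 (range (2 * N + 1)) (fun x => range (x + 1))
    fun x _ => nonempty_range_add_one
  simp only [card_range, Nat.cast_add, Nat.cast_one] at chain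
  exact ⟨chain, chain.trans (by rw [Real.sum_range_logb_add_one])⟩
end

section
/- Let R(N) = H(p_{X,Y}) / log₂((2N+1)(N+1)), where H(p_{X,Y}) is the Shannon entropy of the joint distribution p(x,y) = (2/(N+2))²(N/(N+2))^x on {(x,y) ∈ ℕ² : y ≤ x}. Then R(N) → 1 as N → ∞. -/
/-!
Grouping the terms by `x`, the entropy is a combination of `∑ (x+1) rˣ` and `∑ x(x+1) rˣ` with
`r = N/(N+2)`, which gives the closed form `H = 2 log₂((N+2)/2) + N log₂((N+2)/N)`.
Its difference with `log₂((2N+1)(N+1))` stays bounded, since the ratio of the arguments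
`((N+2)/2)² / ((2N+1)(N+1))` tends to `1/8` and `N log(1 + 2/N) → 2`, while the denominator tends to
infinity; hence their ratio tends to `1`.
-/

open Filter Real Topology

section MulGeometric

variable {𝕜 : Type*} [NormedField 𝕜] {r : 𝕜}

theorem hasSum_succ_mul_geometric_of_norm_lt_one (hr : ‖r‖ < 1) :
    HasSum (fun n : ℕ ↦ ((n : 𝕜) + 1) * r ^ n) (1 / (1 - r) ^ 2) := by
  simpa using hasSum_choose_mul_geometric_of_norm_lt_one 1 hr

theorem hasSum_mul_succ_mul_geometric_of_norm_lt_one (hr : ‖r‖ < 1) :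
    HasSum (fun n : ℕ ↦ (n : 𝕜) * (n + 1) * r ^ n) (2 * r / (1 - r) ^ 3) := by
  have hr_ne : 1 - r ≠ 0 := sub_ne_zero.2 (by rintro rfl; simp at hr)
  have hterm : ∀ n : ℕ, (n : 𝕜) * (n + 1) * r ^ n
      = 2 * ((n + 2).choose 2 * r ^ n) - 2 * ((n + 1) * r ^ n) := by
    intro n
    have hchoose : ((n + 2).choose 2 : 𝕜) * 2 = ((n : 𝕜) + 2) * (n + 1) := by
      have h : (n + 2).choose 2 * 2 = (n + 2) * (n + 1) := by
        simpa using ((n + 1).add_one_mul_choose_eq 1).symm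
      exact_mod_cast congrArg (Nat.cast (R := 𝕜)) h
    linear_combination (-(r ^ n)) * hchoose
  have hsum : 2 * r / (1 - r) ^ 3 = 2 * (1 / (1 - r) ^ (2 + 1)) - 2 * (1 / (1 - r) ^ 2) := by
    field_simp
    ring
  rw [funext hterm, hsum]
  exact ((hasSum_choose_mul_geometric_of_norm_lt_one 2 hr).mul_left 2).sub
    ((hasSum_succ_mul_geometric_of_norm_lt_one hr).mul_left 2)

end MulGeometric

theorem tsum_sum_range_negMul_logb_geometric {r : ℝ} (hr₀ : 0 < r) (hr₁ : r < 1) (b : ℝ) :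
    ∑' x : ℕ, ∑ _y ∈ Finset.range (x + 1),
        -((1 - r) ^ 2 * r ^ x) * logb b ((1 - r) ^ 2 * r ^ x)
      = -logb b ((1 - r) ^ 2) - 2 * r / (1 - r) * logb b r := by
  have hr : ‖r‖ < 1 := by rwa [norm_of_nonneg hr₀.le]
  have hterm : ∀ x : ℕ, ∑ _y ∈ Finset.range (x + 1),
        -((1 - r) ^ 2 * r ^ x) * logb b ((1 - r) ^ 2 * r ^ x)
      = -((1 - r) ^ 2 * logb b ((1 - r) ^ 2)) * ((x + 1) * r ^ x)
        - (1 - r) ^ 2 * logb b r * (x * (x + 1) * r ^ x) := by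
    intro x
    rw [Finset.sum_const, Finset.card_range, nsmul_eq_mul,
      logb_mul (by nlinarith) (by positivity), logb_pow b r]
    push_cast
    ring
  rw [tsum_congr hterm, (((hasSum_succ_mul_geometric_of_norm_lt_one hr).mul_left _).sub
    ((hasSum_mul_succ_mul_geometric_of_norm_lt_one hr).mul_left _)).tsum_eq]
  have hr_ne : 1 - r ≠ 0 := by linarith
  field_simp

theorem tendsto_div_nhds_one_of_tendsto_sub {𝕜 α : Type*} [Field 𝕜] [LinearOrder 𝕜]
    [IsStrictOrderedRing 𝕜] [TopologicalSpace 𝕜] [OrderTopology 𝕜] {l : Filter α}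
    {f g : α → 𝕜} {c : 𝕜}
    (hfg : Tendsto (fun x ↦ f x - g x) l (𝓝 c)) (hg : Tendsto g l atTop) :
    Tendsto (fun x ↦ f x / g x) l (𝓝 1) := by
  have h := (hfg.div_atTop hg).const_add 1
  rw [add_zero] at h
  refine h.congr' ?_
  filter_upwards [hg.eventually_gt_atTop 0] with x hx
  field_simp
  ring

theorem tendsto_two_mul_log_sub_log_atTop :
    Tendsto (fun N : ℝ ↦ 2 * log ((N + 2) / 2) - log ((2 * N + 1) * (N + 1))) atTop
      (𝓝 (-log 8)) := by
  have hq : Tendsto (fun t : ℝ ↦ (1 + 2 * t) ^ 2 / (4 * ((2 + t) * (1 + t)))) (𝓝 0)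
      (𝓝 (1 / 8)) := by
    have hc : ContinuousAt (fun t : ℝ ↦ (1 + 2 * t) ^ 2 / (4 * ((2 + t) * (1 + t)))) 0 := by
      fun_prop (disch := norm_num)
    convert hc.tendsto using 2
    norm_num
  have h := ((continuousAt_log (by norm_num)).tendsto.comp hq).comp tendsto_inv_atTop_zero
  rw [one_div, log_inv] at h
  refine h.congr' ?_
  filter_upwards [eventually_gt_atTop 0] with N hN
  have hratio : (1 + 2 * N⁻¹) ^ 2 / (4 * ((2 + N⁻¹) * (1 + N⁻¹)))
      = ((N + 2) / 2) ^ 2 / ((2 * N + 1) * (N + 1)) := by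
    field_simp
    ring
  simp only [Function.comp_apply, hratio]
  rw [log_div (by positivity) (by positivity), log_pow]
  push_cast
  ring

theorem tendsto_entropy_sub_log_atTop :
    Tendsto (fun N : ℝ ↦ 2 * log ((N + 2) / 2) + N * log ((N + 2) / N)
      - log ((2 * N + 1) * (N + 1))) atTop (𝓝 (2 - log 8)) := by
  have h := tendsto_two_mul_log_sub_log_atTop.add (tendsto_mul_log_one_add_div_atTop 2)
  rw [neg_add_eq_sub] at h
  refine h.congr' ?_
  filter_upwards [eventually_gt_atTop 0] with N hN
  rw [one_add_div hN.ne', add_comm N 2]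
  ring

theorem tsum_entropy_eq {N : ℝ} (hN : 0 < N) :
    ∑' x : ℕ, ∑ _y ∈ Finset.range (x + 1),
        -((2 / (N + 2)) ^ 2 * (N / (N + 2)) ^ x) *
          logb 2 ((2 / (N + 2)) ^ 2 * (N / (N + 2)) ^ x)
      = (2 * log ((N + 2) / 2) + N * log ((N + 2) / N)) / log 2 := by
  have hr₀ : 0 < N / (N + 2) := by positivity
  have hr₁ : N / (N + 2) < 1 := (div_lt_one (by positivity)).2 (by linarith)
  have hcompl : 2 / (N + 2) = 1 - N / (N + 2) := by
    field_simp
    ring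
  have hcoef : 2 * (N / (N + 2)) / (1 - N / (N + 2)) = N := by
    rw [← hcompl]
    field_simp
  rw [hcompl, tsum_sum_range_negMul_logb_geometric hr₀ hr₁, hcoef, ← hcompl]
  simp only [logb, log_pow, ← inv_div (N + 2), log_inv]
  push_cast
  ring

/-- The distillation rate `R(N) = H(p_{X,Y}) / log₂((2N+1)(N+1)) → 1` as `N → ∞`. -/
theorem stmt13 :
    Filter.Tendsto (fun N : ℝ =>
      (∑' x : ℕ, ∑ y ∈ Finset.range (x + 1),
        -((2 / (N + 2)) ^ 2 * (N / (N + 2)) ^ x) *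
          Real.logb 2 ((2 / (N + 2)) ^ 2 * (N / (N + 2)) ^ x)) /
        Real.logb 2 ((2 * N + 1) * (N + 1)))
      Filter.atTop (nhds 1) := by
  have hden : Tendsto (fun N : ℝ ↦ log ((2 * N + 1) * (N + 1))) atTop atTop := by
    refine tendsto_log_atTop.comp (tendsto_atTop_mono' atTop ?_ tendsto_id)
    filter_upwards [eventually_ge_atTop 0] with N hN
    simp only [id]
    nlinarith
  refine (tendsto_div_nhds_one_of_tendsto_sub tendsto_entropy_sub_log_atTop hden).congr' ?_
  filter_upwards [eventually_gt_atTop 0] with N hN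
  rw [tsum_entropy_eq hN, logb, div_div_div_cancel_right₀ (log_pos one_lt_two).ne']
end

section
/- For even N, the entropy of coherence of the pair-correlated state Ψ(π/4, N/2)_N is eventually bounded below by c·log₂ N for some constant c > 0; specifically, there exist c > 0 and N₀ such that for all even N ≥ N₀, ∑_{k} -p(k) log₂ p(k) ≥ c log₂ N, where p(k) = |⟨k, N−k|Ψ(π/4,N/2)_N⟩|². -/
/-!
Shannon entropy dominates min-entropy: `H(p) ≥ -log₂ (max p)`. Here the largest probability is
`C(m, ⌊m/2⌋)² / C(2m, m)`, and the elementary bounds `16ⁿ / (4n) ≤ C(2n, n)² ≤ 16ⁿ / (n + 1)`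
show it is at most `4 / √m`, hence at most `(2m)^(-1/4)` once `m ≥ 512`.
-/

open Finset Real

namespace Nat

theorem succ_mul_centralBinom_sq_le (n : ℕ) : (n + 1) * centralBinom n ^ 2 ≤ 16 ^ n := by
  induction n with
  | zero => simp
  | succ n ih =>
    refine Nat.le_of_mul_le_mul_right (c := (n + 1) ^ 3) ?_ (by positivity)
    calc (n + 1 + 1) * centralBinom (n + 1) ^ 2 * (n + 1) ^ 3
        = (n + 2) * (n + 1) * ((n + 1) * centralBinom (n + 1)) ^ 2 := by ring
      _ = 4 * (n + 2) * (2 * n + 1) ^ 2 * ((n + 1) * centralBinom n ^ 2) := by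
        rw [succ_mul_centralBinom_succ]; ring
      _ ≤ 16 * (n + 1) ^ 3 * 16 ^ n := Nat.mul_le_mul (by nlinarith) ih
      _ = 16 ^ (n + 1) * (n + 1) ^ 3 := by ring

theorem sixteen_pow_le_four_mul_mul_centralBinom_sq {n : ℕ} (hn : n ≠ 0) :
    16 ^ n ≤ 4 * n * centralBinom n ^ 2 := by
  induction n, Nat.one_le_iff_ne_zero.mpr hn using Nat.le_induction with
  | base => simp [centralBinom, choose]
  | succ n hn ih =>
    refine Nat.le_of_mul_le_mul_right (c := n + 1) ?_ (by omega)
    calc 16 ^ (n + 1) * (n + 1) = 16 * (n + 1) * 16 ^ n := by ring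
      _ ≤ 16 * (2 * n + 1) ^ 2 * centralBinom n ^ 2 := by
        grw [ih (by omega)]
        nlinarith
      _ = 4 * (n + 1) * centralBinom (n + 1) ^ 2 * (n + 1) := by
        rw [show 4 * (n + 1) * centralBinom (n + 1) ^ 2 * (n + 1)
          = 4 * ((n + 1) * centralBinom (n + 1)) ^ 2 by ring, succ_mul_centralBinom_succ]
        ring

theorem choose_two_mul_add_one_le_two_mul_centralBinom (n : ℕ) :
    (2 * n + 1).choose n ≤ 2 * centralBinom n := by
  rw [← choose_symm_half, choose_succ_succ', ← centralBinom_eq_two_mul_choose]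
  have := choose_le_centralBinom (n + 1) n
  omega

theorem mul_choose_half_sq_le (m : ℕ) : m * m.choose (m / 2) ^ 2 ≤ 2 * 4 ^ m := by
  obtain ⟨n, rfl | rfl⟩ := Nat.even_or_odd' m
  · rw [Nat.mul_div_cancel_left n two_pos, ← centralBinom_eq_two_mul_choose]
    calc 2 * n * centralBinom n ^ 2 ≤ 2 * ((n + 1) * centralBinom n ^ 2) := by nlinarith
      _ ≤ 2 * 16 ^ n := by grw [succ_mul_centralBinom_sq_le n]
      _ = 2 * 4 ^ (2 * n) := by rw [pow_mul]; norm_num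
  · rw [show (2 * n + 1) / 2 = n by omega]
    have hle := choose_two_mul_add_one_le_two_mul_centralBinom n
    calc (2 * n + 1) * (2 * n + 1).choose n ^ 2 ≤ (2 * n + 1) * (2 * centralBinom n) ^ 2 := by
          gcongr
      _ ≤ 8 * ((n + 1) * centralBinom n ^ 2) := by nlinarith
      _ ≤ 8 * 16 ^ n := by grw [succ_mul_centralBinom_sq_le n]
      _ = 2 * 4 ^ (2 * n + 1) := by rw [pow_succ, pow_mul]; ring

theorem mul_choose_half_pow_four_le (m : ℕ) :
    m * m.choose (m / 2) ^ 4 ≤ 16 * centralBinom m ^ 2 := by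
  rcases Nat.eq_zero_or_pos m with rfl | hm
  · simp
  refine Nat.le_of_mul_le_mul_left ?_ hm
  calc m * (m * m.choose (m / 2) ^ 4) = (m * m.choose (m / 2) ^ 2) ^ 2 := by ring
    _ ≤ (2 * 4 ^ m) ^ 2 := by grw [mul_choose_half_sq_le]
    _ = 4 * 16 ^ m := by rw [mul_pow, ← pow_mul, mul_comm m, pow_mul]; norm_num
    _ ≤ 4 * (4 * m * centralBinom m ^ 2) := by
      grw [sixteen_pow_le_four_mul_mul_centralBinom_sq hm.ne']
    _ = m * (16 * centralBinom m ^ 2) := by ring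

theorem two_mul_mul_choose_half_pow_eight_le {m : ℕ} (hm : 512 ≤ m) :
    2 * m * m.choose (m / 2) ^ 8 ≤ centralBinom m ^ 4 := by
  refine Nat.le_of_mul_le_mul_left (c := 256) ?_ (by norm_num)
  calc 256 * (2 * m * m.choose (m / 2) ^ 8) ≤ m * m * m.choose (m / 2) ^ 8 := by
        rw [← mul_assoc, ← mul_assoc]; gcongr; omega
    _ = (m * m.choose (m / 2) ^ 4) ^ 2 := by ring
    _ ≤ (16 * centralBinom m ^ 2) ^ 2 := by grw [mul_choose_half_pow_four_le]
    _ = 256 * centralBinom m ^ 4 := by ring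

end Nat

namespace Real

theorem neg_logb_le_sum_neg_mul_logb_of_le {ι : Type*} {s : Finset ι} {p : ι → ℝ} {b q : ℝ}
    (hb : 1 < b) (hp : ∀ i ∈ s, 0 ≤ p i) (hp1 : ∑ i ∈ s, p i = 1) (hq : ∀ i ∈ s, p i ≤ q) :
    -logb b q ≤ ∑ i ∈ s, -p i * logb b (p i) := by
  calc -logb b q = ∑ i ∈ s, p i * -logb b q := by rw [← sum_mul, hp1, one_mul]
    _ ≤ ∑ i ∈ s, -p i * logb b (p i) := by
      refine sum_le_sum fun i hi => ?_
      rcases (hp i hi).eq_or_lt with h | h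
      · simp [← h]
      · nlinarith [logb_le_logb_of_le hb h (hq i hi)]

theorem logb_le_neg_mul_logb_of_mul_pow_le_one {b N P : ℝ} (hb : 1 < b) (hN : 0 < N)
    (hP : 0 < P) (k : ℕ) (h : N * P ^ k ≤ 1) : logb b N ≤ -(k * logb b P) := by
  have := logb_le_logb_of_le hb (by positivity) h
  rw [logb_one, logb_mul hN.ne' (by positivity), logb_pow] at this
  linarith

end Real

/-- The entropy of coherence of the pair-correlated state `Ψ(π/4, N/2)_N` (with `N = 2m`,
nonzero Fock probabilities `p(2j) = C(m,j)²/C(2m,m)`) is eventually at least `c log₂ N`. -/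
theorem stmt18 :
    ∃ c : ℝ, 0 < c ∧ ∃ N₀ : ℕ, ∀ m : ℕ, N₀ ≤ m →
      c * Real.logb 2 ((2 * m : ℕ) : ℝ) ≤
        ∑ j ∈ Finset.range (m + 1),
          -(((m.choose j : ℝ) ^ 2 / ((2 * m).choose m : ℝ))) *
            Real.logb 2 ((m.choose j : ℝ) ^ 2 / ((2 * m).choose m : ℝ)) := by
  refine ⟨1 / 4, by norm_num, 512, fun m hm => ?_⟩
  set A := m.choose (m / 2)
  set B := (2 * m).choose m
  have hB : (0 : ℝ) < B := by exact_mod_cast Nat.choose_pos (by omega)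
  have hA : (0 : ℝ) < A := by exact_mod_cast Nat.choose_pos (Nat.div_le_self m 2)
  have hsum : ∑ j ∈ range (m + 1), (m.choose j : ℝ) ^ 2 / B = 1 := by
    rw [← sum_div, div_eq_one_iff_eq hB.ne']
    exact_mod_cast Nat.sum_range_choose_sq m
  have hmax : ∀ j ∈ range (m + 1), (m.choose j : ℝ) ^ 2 / B ≤ A ^ 2 / B := fun j _ => by
    gcongr
    exact_mod_cast Nat.choose_le_middle j m
  have hpow : ((2 * m : ℕ) : ℝ) * (A ^ 2 / B) ^ 4 ≤ 1 := by
    rw [div_pow, ← pow_mul, mul_div_assoc', div_le_one (by positivity)]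
    exact_mod_cast Nat.two_mul_mul_choose_half_pow_eight_le hm
  have hentropy := neg_logb_le_sum_neg_mul_logb_of_le one_lt_two
    (fun j _ => by positivity) hsum hmax
  have hlog := logb_le_neg_mul_logb_of_mul_pow_le_one one_lt_two
    (by exact_mod_cast (by omega : 0 < 2 * m)) (by positivity) 4 hpow
  linarith
end

section
/- The two-particle output of the Hong–Ou–Mandel-type channel satisfies: applying the beamsplitter unitary U = exp(i(π/4)(a₁*a₃ + a₃*a₁)) to the state a₃*(c₁a₁* + c₂a₂*)|VAC⟩ and tracing out mode 3 yields the mixed state (|c₁|²/2)|VAC⟩⟨VAC| + (|c₂|²/2)|0,1⟩⟨0,1| + (1/2)|φ⟩⟨φ| on modes 1,2, where |φ⟩ = (c₁ a₁*²/√2 + c₂ a₁*a₂*)|VAC⟩. -/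
noncomputable section

/-- Amplitude function of a 3-mode bosonic Fock state in the occupation-number basis. -/
abbrev Fock3 := (ℕ × ℕ × ℕ) → ℂ

/-- Creation operator on mode 1. -/
def adag1 (ψ : Fock3) : Fock3 := fun n =>
  match n with
  | (0, _, _) => 0
  | (n1 + 1, n2, n3) => (Real.sqrt (n1 + 1) : ℂ) * ψ (n1, n2, n3)

/-- Creation operator on mode 2. -/
def adag2 (ψ : Fock3) : Fock3 := fun n =>
  match n with
  | (_, 0, _) => 0
  | (n1, n2 + 1, n3) => (Real.sqrt (n2 + 1) : ℂ) * ψ (n1, n2, n3)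

/-- Creation operator on mode 3. -/
def adag3 (ψ : Fock3) : Fock3 := fun n =>
  match n with
  | (_, _, 0) => 0
  | (n1, n2, n3 + 1) => (Real.sqrt (n3 + 1) : ℂ) * ψ (n1, n2, n3)

/-- Annihilation operator on mode 1. -/
def ann1 (ψ : Fock3) : Fock3 := fun n =>
  (Real.sqrt (n.1 + 1) : ℂ) * ψ (n.1 + 1, n.2.1, n.2.2)

/-- Annihilation operator on mode 2. -/
def ann2 (ψ : Fock3) : Fock3 := fun n =>
  (Real.sqrt (n.2.1 + 1) : ℂ) * ψ (n.1, n.2.1 + 1, n.2.2)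

/-- Annihilation operator on mode 3. -/
def ann3 (ψ : Fock3) : Fock3 := fun n =>
  (Real.sqrt (n.2.2 + 1) : ℂ) * ψ (n.1, n.2.1, n.2.2 + 1)

/-- The vacuum state. -/
def vac : Fock3 := fun n => if n = (0, 0, 0) then 1 else 0

/-- Two-mode vacuum amplitude function `|0,0⟩`. -/
def vac2 : ℕ × ℕ → ℂ := fun a => if a = (0, 0) then 1 else 0

/-- Two-mode state `|0,1⟩`. -/
def e01 : ℕ × ℕ → ℂ := fun a => if a = (0, 1) then 1 else 0

/-- The two-particle state `|φ⟩ = (c₁ a₁*²/√2 + c₂ a₁*a₂*)|VAC⟩ = c₁|2,0⟩ + c₂|1,1⟩`. -/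
def phiState (c₁ c₂ : ℂ) : ℕ × ℕ → ℂ := fun a =>
  if a = (2, 0) then c₁ else if a = (1, 1) then c₂ else 0

/-!
Inverting the Heisenberg-picture relations gives `U a₁* = (a₁* + i a₃*) U / √2` and
`U a₃* = (a₃* + i a₁*) U / √2`. As `U` fixes the vacuum, the output state is
`(i c₁ / 2) (a₁*² + a₃*²)|VAC⟩ + (c₂ / √2) (a₃* + i a₁*) a₂*|VAC⟩`: the two amplitudes of
`a₁* a₃*|VAC⟩` cancel, which is the Hong–Ou–Mandel effect. Sorted by the photon number in mode 3,
the output is `(i|φ⟩ ⊗ |0⟩ + c₂|0,1⟩ ⊗ |1⟩ + i c₁|VAC⟩ ⊗ |2⟩) / √2`, so tracing out mode 3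
leaves the sum of the three rank-one pieces.
-/

open Complex ComplexConjugate

def ket3 (n : ℕ × ℕ × ℕ) : Fock3 := Pi.single n 1

def ket2 (a : ℕ × ℕ) : ℕ × ℕ → ℂ := Pi.single a 1

theorem vac_eq_ket3 : vac = ket3 (0, 0, 0) := by
  ext n; simp [vac, ket3, Pi.single_apply]

theorem vac2_eq_ket2 : vac2 = ket2 (0, 0) := by
  ext a; simp [vac2, ket2, Pi.single_apply]

theorem e01_eq_ket2 : e01 = ket2 (0, 1) := by
  ext a; simp [e01, ket2, Pi.single_apply]

theorem phiState_eq (c₁ c₂ : ℂ) : phiState c₁ c₂ = c₁ • ket2 (2, 0) + c₂ • ket2 (1, 1) := by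
  ext a
  by_cases h : a = (2, 0) <;> by_cases h' : a = (1, 1) <;> simp_all [phiState, ket2]

theorem adag1_add (ψ φ : Fock3) : adag1 (ψ + φ) = adag1 ψ + adag1 φ := by
  ext ⟨_ | n₁, n₂, n₃⟩ <;> simp [adag1, mul_add]

theorem adag1_smul (c : ℂ) (ψ : Fock3) : adag1 (c • ψ) = c • adag1 ψ := by
  ext ⟨_ | n₁, n₂, n₃⟩ <;> simp [adag1, mul_left_comm]

theorem adag3_add (ψ φ : Fock3) : adag3 (ψ + φ) = adag3 ψ + adag3 φ := by
  ext ⟨n₁, n₂, _ | n₃⟩ <;> simp [adag3, mul_add]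

theorem adag3_smul (c : ℂ) (ψ : Fock3) : adag3 (c • ψ) = c • adag3 ψ := by
  ext ⟨n₁, n₂, _ | n₃⟩ <;> simp [adag3, mul_left_comm]

theorem adag1_adag3_comm (ψ : Fock3) : adag1 (adag3 ψ) = adag3 (adag1 ψ) := by
  ext ⟨_ | n₁, n₂, _ | n₃⟩ <;> simp [adag1, adag3, mul_left_comm]

theorem adag1_ket3 (n₁ n₂ n₃ : ℕ) :
    adag1 (ket3 (n₁, n₂, n₃)) = (Real.sqrt (n₁ + 1) : ℂ) • ket3 (n₁ + 1, n₂, n₃) := by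
  ext ⟨_ | m₁, m₂, m₃⟩ <;> simp [adag1, ket3, Pi.single_apply]
  split_ifs with h <;> simp [h]

theorem adag2_ket3 (n₁ n₂ n₃ : ℕ) :
    adag2 (ket3 (n₁, n₂, n₃)) = (Real.sqrt (n₂ + 1) : ℂ) • ket3 (n₁, n₂ + 1, n₃) := by
  ext ⟨m₁, _ | m₂, m₃⟩ <;> simp [adag2, ket3, Pi.single_apply]
  split_ifs with h <;> simp [h]

theorem adag3_ket3 (n₁ n₂ n₃ : ℕ) :
    adag3 (ket3 (n₁, n₂, n₃)) = (Real.sqrt (n₃ + 1) : ℂ) • ket3 (n₁, n₂, n₃ + 1) := by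
  ext ⟨m₁, m₂, _ | m₃⟩ <;> simp [adag3, ket3, Pi.single_apply]
  split_ifs with h <;> simp [h]

/-- `φ ⊗ |k⟩`, with `k` photons in mode 3. -/
def tensorKet3 (φ : ℕ × ℕ → ℂ) (k : ℕ) : Fock3 :=
  fun n => if n.2.2 = k then φ (n.1, n.2.1) else 0

theorem tensorKet3_add (φ ψ : ℕ × ℕ → ℂ) (k : ℕ) :
    tensorKet3 (φ + ψ) k = tensorKet3 φ k + tensorKet3 ψ k := by
  ext n; simp only [tensorKet3, Pi.add_apply]; split_ifs <;> simp

theorem tensorKet3_smul (c : ℂ) (φ : ℕ × ℕ → ℂ) (k : ℕ) :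
    tensorKet3 (c • φ) k = c • tensorKet3 φ k := by
  ext n; simp only [tensorKet3, Pi.smul_apply]; split_ifs <;> simp

theorem tensorKet3_ket2 (n₁ n₂ k : ℕ) : tensorKet3 (ket2 (n₁, n₂)) k = ket3 (n₁, n₂, k) := by
  ext ⟨m₁, m₂, m₃⟩
  simp only [tensorKet3, ket2, ket3, Pi.single_apply, Prod.mk.injEq]
  split_ifs <;> simp_all

def reducedDensity (χ : Fock3) (a b : ℕ × ℕ) : ℂ :=
  ∑' n₃, χ (a.1, a.2, n₃) * conj (χ (b.1, b.2, n₃))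

theorem reducedDensity_smul (c : ℂ) (χ : Fock3) (a b : ℕ × ℕ) :
    reducedDensity (c • χ) a b = (‖c‖ ^ 2 : ℝ) * reducedDensity χ a b := by
  simp only [reducedDensity, Pi.smul_apply, smul_eq_mul, map_mul, ← tsum_mul_left]
  congr 1 with n
  push_cast [← mul_conj']
  ring

theorem reducedDensity_sum_tensorKet3 (s : Finset ℕ) (φ : ℕ → ℕ × ℕ → ℂ) (a b : ℕ × ℕ) :
    reducedDensity (∑ k ∈ s, tensorKet3 (φ k) k) a b = ∑ k ∈ s, φ k a * conj (φ k b) := by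
  have hcomp (c : ℕ × ℕ) (n : ℕ) :
      (∑ k ∈ s, tensorKet3 (φ k) k) (c.1, c.2, n) = if n ∈ s then φ n c else 0 := by
    simp [Finset.sum_apply, tensorKet3]
  simp only [reducedDensity, hcomp]
  rw [tsum_eq_sum (s := s) fun n hn => by simp [hn]]
  exact Finset.sum_congr rfl fun n hn => by simp [hn]

theorem two_mul_inv_sqrt_two_sq : 2 * ((Real.sqrt 2 : ℂ)⁻¹) ^ 2 = 1 := by
  have h : ((Real.sqrt 2 : ℝ) : ℂ) ^ 2 = 2 := by norm_cast; simp
  rw [inv_pow, h]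
  norm_num

theorem map_apply_eq_of_beamsplitter {V : Type*} [AddCommGroup V] [Module ℂ V]
    (U : V →ₗ[ℂ] V) (A B : V → V) {s : ℂ} (hs : 2 * s ^ 2 = 1)
    (hA : ∀ ψ, A (U ψ) = U (s • (A ψ - I • B ψ))) (hB : ∀ ψ, B (U ψ) = U (s • (B ψ - I • A ψ)))
    (ψ : V) : U (A ψ) = s • (A (U ψ) + I • B (U ψ)) := by
  calc U (A ψ) = U (s • (s • (A ψ - I • B ψ) + I • s • (B ψ - I • A ψ))) := by
        congr 1
        match_scalars
        · linear_combination s ^ 2 * I_sq - hs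
        · ring
    _ = s • (A (U ψ) + I • B (U ψ)) := by simp only [hA, hB, map_smul, map_add]

theorem map_adag3_superposition (U : Fock3 →ₗ[ℂ] Fock3) {s : ℂ} (hvac : U vac = vac)
    (h₁ : ∀ ψ, U (adag1 ψ) = s • (adag1 (U ψ) + I • adag3 (U ψ)))
    (h₃ : ∀ ψ, U (adag3 ψ) = s • (adag3 (U ψ) + I • adag1 (U ψ)))
    (h₂ : ∀ ψ, adag2 (U ψ) = U (adag2 ψ)) (c₁ c₂ : ℂ) :
    U (adag3 (c₁ • adag1 vac + c₂ • adag2 vac)) =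
      (s ^ 2 * I * c₁) • (adag1 (adag1 vac) + adag3 (adag3 vac)) +
        (s * c₂) • (adag3 (adag2 vac) + I • adag1 (adag2 vac)) := by
  rw [h₃, map_add, map_smul, map_smul, h₁, ← h₂, hvac]
  simp only [adag1_add, adag1_smul, adag3_add, adag3_smul, adag1_adag3_comm]
  match_scalars
  -- Hong–Ou–Mandel: the two amplitudes of `a₁* a₃* |VAC⟩` cancel
  · linear_combination s ^ 2 * c₁ * I_sq
  all_goals ring

/-- The output state sorted by the photon number `k` in mode 3, without its factor `1/√2`. -/
def outputComponent (c₁ c₂ : ℂ) : ℕ → ℕ × ℕ → ℂ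
  | 0 => I • phiState c₁ c₂
  | 1 => c₂ • e01
  | 2 => (I * c₁) • vac2
  | _ => 0

theorem twoPhoton_eq_sum_tensorKet3 (c₁ c₂ : ℂ) :
    (((Real.sqrt 2 : ℂ)⁻¹) ^ 2 * I * c₁) • (adag1 (adag1 vac) + adag3 (adag3 vac)) +
        ((Real.sqrt 2 : ℂ)⁻¹ * c₂) • (adag3 (adag2 vac) + I • adag1 (adag2 vac)) =
      (Real.sqrt 2 : ℂ)⁻¹ • ∑ k ∈ Finset.range 3, tensorKet3 (outputComponent c₁ c₂ k) k := by
  simp only [Finset.sum_range_succ, Finset.sum_range_zero, outputComponent, phiState_eq,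
    e01_eq_ket2, vac2_eq_ket2, tensorKet3_add, tensorKet3_smul, tensorKet3_ket2, vac_eq_ket3,
    adag1_ket3, adag2_ket3, adag3_ket3, adag1_smul, adag3_smul]
  simp only [Nat.cast_zero, zero_add, Nat.cast_one, one_add_one_eq_two, Real.sqrt_one,
    Complex.ofReal_one, one_smul]
  match_scalars <;> field_simp

theorem stmt19_general (c₁ c₂ : ℂ)
    (U : Fock3 →ₗ[ℂ] Fock3)
    (hvac : U vac = vac)
    (hU1d : ∀ ψ, adag1 (U ψ) = U ((Real.sqrt 2 : ℂ)⁻¹ • (adag1 ψ - Complex.I • adag3 ψ)))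
    (hU3d : ∀ ψ, adag3 (U ψ) = U ((Real.sqrt 2 : ℂ)⁻¹ • (adag3 ψ - Complex.I • adag1 ψ)))
    (hU2d : ∀ ψ, adag2 (U ψ) = U (adag2 ψ)) :
    ∀ a b : ℕ × ℕ,
      (∑' n₃ : ℕ,
        (U (adag3 (c₁ • adag1 vac + c₂ • adag2 vac))) (a.1, a.2, n₃) *
          (starRingEnd ℂ) ((U (adag3 (c₁ • adag1 vac + c₂ • adag2 vac))) (b.1, b.2, n₃))) =
      ((‖c₁‖ ^ 2 / 2 : ℝ) : ℂ) * vac2 a * (starRingEnd ℂ) (vac2 b)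
      + ((‖c₂‖ ^ 2 / 2 : ℝ) : ℂ) * e01 a * (starRingEnd ℂ) (e01 b)
      + (1 / 2 : ℂ) * phiState c₁ c₂ a * (starRingEnd ℂ) (phiState c₁ c₂ b) := by
  intro a b
  have hs := two_mul_inv_sqrt_two_sq
  have h₁ := map_apply_eq_of_beamsplitter U adag1 adag3 hs hU1d hU3d
  have h₃ := map_apply_eq_of_beamsplitter U adag3 adag1 hs hU3d hU1d
  have hnorm : ‖(Real.sqrt 2 : ℂ)⁻¹‖ ^ 2 = 1 / 2 := by simp
  change reducedDensity _ a b = _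
  rw [map_adag3_superposition U hvac h₁ h₃ hU2d, twoPhoton_eq_sum_tensorKet3, reducedDensity_smul,
    reducedDensity_sum_tensorKet3, hnorm]
  simp only [Finset.sum_range_succ, Finset.sum_range_zero, outputComponent, Pi.smul_apply,
    smul_eq_mul, map_mul, conj_I]
  push_cast [← mul_conj']
  ring_nf
  simp only [I_sq]
  ring

/-- Hong–Ou–Mandel-type channel: applying the beamsplitter unitary `U` (acting as
`U*a₁U = (a₁+ia₃)/√2`, `U*a₃U = (ia₁+a₃)/√2`, `U*a₂U = a₂`, preserving the vacuum)
to `a₃*(c₁a₁*+c₂a₂*)|VAC⟩` and tracing out mode 3 yields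
`(|c₁|²/2)|VAC⟩⟨VAC| + (|c₂|²/2)|0,1⟩⟨0,1| + (1/2)|φ⟩⟨φ|`. -/
theorem stmt19 (c₁ c₂ : ℂ)
    (hc : ‖c₁‖ ^ 2 + ‖c₂‖ ^ 2 = 1)
    (U : Fock3 →ₗ[ℂ] Fock3)
    (hvac : U vac = vac)
    (hU1 : ∀ ψ, ann1 (U ψ) = U ((Real.sqrt 2 : ℂ)⁻¹ • (ann1 ψ + Complex.I • ann3 ψ)))
    (hU3 : ∀ ψ, ann3 (U ψ) = U ((Real.sqrt 2 : ℂ)⁻¹ • (Complex.I • ann1 ψ + ann3 ψ)))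
    (hU2 : ∀ ψ, ann2 (U ψ) = U (ann2 ψ))
    (hU1d : ∀ ψ, adag1 (U ψ) = U ((Real.sqrt 2 : ℂ)⁻¹ • (adag1 ψ - Complex.I • adag3 ψ)))
    (hU3d : ∀ ψ, adag3 (U ψ) = U ((Real.sqrt 2 : ℂ)⁻¹ • (adag3 ψ - Complex.I • adag1 ψ)))
    (hU2d : ∀ ψ, adag2 (U ψ) = U (adag2 ψ)) :
    ∀ a b : ℕ × ℕ,
      (∑' n₃ : ℕ,
        (U (adag3 (c₁ • adag1 vac + c₂ • adag2 vac))) (a.1, a.2, n₃) *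
          (starRingEnd ℂ) ((U (adag3 (c₁ • adag1 vac + c₂ • adag2 vac))) (b.1, b.2, n₃))) =
      ((‖c₁‖ ^ 2 / 2 : ℝ) : ℂ) * vac2 a * (starRingEnd ℂ) (vac2 b)
      + ((‖c₂‖ ^ 2 / 2 : ℝ) : ℂ) * e01 a * (starRingEnd ℂ) (e01 b)
      + (1 / 2 : ℂ) * phiState c₁ c₂ a * (starRingEnd ℂ) (phiState c₁ c₂ b) :=
  stmt19_general c₁ c₂ U hvac hU1d hU3d hU2d

end
end
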